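/- Let u : ℝ³ → ℝ be twice continuously differentiable in (x,y,t) satisfying u_{yy} + u_{xt} + u_y u_{tt} − u_t u_{yt} = 0 at every point. Then the following four conservation laws hold at every point: (1) ∂_y(u_y − u_t²) + ∂_t(u_x + u_y u_t) = 0; (2) ∂_x(u_t²/2) + ∂_y(u_y u_t − u_t³/2) + ∂_t(−u_y u_t² − u_y²/2 + (3/2) u_t² u_y) = 0; (3) ∂_x(u_y u_t − u_t³) + ∂_y(−u_x u_t + u_y² − 3 u_y u_t² + u_t⁴) + ∂_t(u_x u_y + 2 u_t u_y² − u_y u_t³) = 0; (4) ∂_x(u_y² − 2 u_y u_t² + u_t⁴) + ∂_y(−2 u_x u_y + 2 u_x u_t² − 3 u_y² u_t + 4 u_y u_t³ − u_t⁵) + ∂_t(−2 u_x u_y u_t − u_x² − 3 u_y² u_t² + u_y u_t⁴ + u_y³) = 0. -/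

import Mathlib

/-! Each flux is a polynomial in `X = u_x`, `Y = u_y`, `T = u_t`, so by the Leibniz rule each
divergence is linear in the first derivatives of `X`, `Y`, `T`, that is, in the Hessian of `u`.
Once the mixed partials are identified, each divergence is a polynomial multiple of the left-hand
side `Y_y + X_t + Y T_t - T Y_t` of the equation, the multipliers being `1`, `T`, `2Y - 3T²` and
`-2X - 6YT + 4T³`. -/

/-- Partial derivative with respect to the first variable `x`. -/
noncomputable def pdx (f : ℝ × ℝ × ℝ → ℝ) (p : ℝ × ℝ × ℝ) : ℝ :=
  deriv (fun s => f (s, p.2.1, p.2.2)) p.1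

/-- Partial derivative with respect to the second variable `y`. -/
noncomputable def pdy (f : ℝ × ℝ × ℝ → ℝ) (p : ℝ × ℝ × ℝ) : ℝ :=
  deriv (fun s => f (p.1, s, p.2.2)) p.2.1

/-- Partial derivative with respect to the third variable `t`. -/
noncomputable def pdt (f : ℝ × ℝ × ℝ → ℝ) (p : ℝ × ℝ × ℝ) : ℝ :=
  deriv (fun s => f (p.1, p.2.1, s)) p.2.2

section
variable {f : ℝ × ℝ × ℝ → ℝ} {p : ℝ × ℝ × ℝ}

theorem pdx_eq_fderiv (hf : DifferentiableAt ℝ f p) : pdx f p = fderiv ℝ f p (1, 0, 0) :=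
  (hf.hasFDerivAt.comp_hasDerivAt p.1 ((hasDerivAt_id _).prodMk (hasDerivAt_const _ _))).deriv

theorem pdy_eq_fderiv (hf : DifferentiableAt ℝ f p) : pdy f p = fderiv ℝ f p (0, 1, 0) :=
  (hf.hasFDerivAt.comp_hasDerivAt p.2.1
    ((hasDerivAt_const _ _).prodMk ((hasDerivAt_id _).prodMk (hasDerivAt_const _ _)))).deriv

theorem pdt_eq_fderiv (hf : DifferentiableAt ℝ f p) : pdt f p = fderiv ℝ f p (0, 0, 1) :=
  (hf.hasFDerivAt.comp_hasDerivAt p.2.2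
    ((hasDerivAt_const _ _).prodMk ((hasDerivAt_const _ _).prodMk (hasDerivAt_id _)))).deriv

end

theorem fderiv_fderiv_apply_comm {E F : Type*} [NormedAddCommGroup E] [NormedSpace ℝ E]
    [NormedAddCommGroup F] [NormedSpace ℝ F] {f : E → F} {x : E} (hf : ContDiffAt ℝ 2 f x)
    (v w : E) :
    fderiv ℝ (fun y => fderiv ℝ f y v) x w = fderiv ℝ (fun y => fderiv ℝ f y w) x v := by
  have hf' : DifferentiableAt ℝ (fderiv ℝ f) x :=
    (hf.fderiv_right (m := 1) le_rfl).differentiableAt one_ne_zero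
  rw [fderiv_clm_apply hf' (differentiableAt_const v),
    fderiv_clm_apply hf' (differentiableAt_const w)]
  simpa using hf.isSymmSndFDerivAt (by simp) w v

section
variable {u : ℝ × ℝ × ℝ → ℝ}

theorem ContDiff.differentiable_pd (hu : ContDiff ℝ 2 u) :
    Differentiable ℝ (pdx u) ∧ Differentiable ℝ (pdy u) ∧ Differentiable ℝ (pdt u) := by
  have hu₁ : Differentiable ℝ u := hu.differentiable two_ne_zero
  have hu₂ : Differentiable ℝ (fderiv ℝ u) :=
    (hu.fderiv_right (m := 1) le_rfl).differentiable one_ne_zero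
  simp only [funext fun p => pdx_eq_fderiv (hu₁ p), funext fun p => pdy_eq_fderiv (hu₁ p),
    funext fun p => pdt_eq_fderiv (hu₁ p)]
  exact ⟨by fun_prop, by fun_prop, by fun_prop⟩

theorem ContDiff.mixed_pd_comm (hu : ContDiff ℝ 2 u) :
    (∀ p, pdy (pdx u) p = pdx (pdy u) p) ∧ (∀ p, pdt (pdx u) p = pdx (pdt u) p) ∧
      ∀ p, pdt (pdy u) p = pdy (pdt u) p := by
  obtain ⟨hX, hY, hT⟩ := hu.differentiable_pd
  have hu₁ : Differentiable ℝ u := hu.differentiable two_ne_zero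
  simp only [funext fun p => pdx_eq_fderiv (hu₁ p), funext fun p => pdy_eq_fderiv (hu₁ p),
    funext fun p => pdt_eq_fderiv (hu₁ p)] at hX hY hT ⊢
  refine ⟨fun p => ?_, fun p => ?_, fun p => ?_⟩
  · rw [pdy_eq_fderiv (hX p), pdx_eq_fderiv (hY p)]
    exact fderiv_fderiv_apply_comm hu.contDiffAt _ _
  · rw [pdt_eq_fderiv (hX p), pdx_eq_fderiv (hT p)]
    exact fderiv_fderiv_apply_comm hu.contDiffAt _ _
  · rw [pdt_eq_fderiv (hY p), pdy_eq_fderiv (hT p)]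
    exact fderiv_fderiv_apply_comm hu.contDiffAt _ _

end

/-- The four first-order conservation laws of the equation
`u_{yy} + u_{xt} + u_y u_{tt} - u_t u_{yt} = 0`. -/
theorem equation4_conservation_laws
    (u : ℝ × ℝ × ℝ → ℝ) (hu : ContDiff ℝ 2 u)
    (heq : ∀ p : ℝ × ℝ × ℝ,
      pdy (pdy u) p + pdt (pdx u) p + pdy u p * pdt (pdt u) p
        - pdt u p * pdt (pdy u) p = 0) :
    (∀ p : ℝ × ℝ × ℝ,
      pdy (fun q => pdy u q - (pdt u q) ^ 2) p
        + pdt (fun q => pdx u q + pdy u q * pdt u q) p = 0) ∧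
    (∀ p : ℝ × ℝ × ℝ,
      pdx (fun q => (pdt u q) ^ 2 / 2) p
        + pdy (fun q => pdy u q * pdt u q - (pdt u q) ^ 3 / 2) p
        + pdt (fun q => -(pdy u q * (pdt u q) ^ 2) - (pdy u q) ^ 2 / 2
            + 3 / 2 * (pdt u q) ^ 2 * pdy u q) p = 0) ∧
    (∀ p : ℝ × ℝ × ℝ,
      pdx (fun q => pdy u q * pdt u q - (pdt u q) ^ 3) p
        + pdy (fun q => -(pdx u q * pdt u q) + (pdy u q) ^ 2
            - 3 * pdy u q * (pdt u q) ^ 2 + (pdt u q) ^ 4) p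
        + pdt (fun q => pdx u q * pdy u q + 2 * pdt u q * (pdy u q) ^ 2
            - pdy u q * (pdt u q) ^ 3) p = 0) ∧
    (∀ p : ℝ × ℝ × ℝ,
      pdx (fun q => (pdy u q) ^ 2 - 2 * pdy u q * (pdt u q) ^ 2 + (pdt u q) ^ 4) p
        + pdy (fun q => -(2 * pdx u q * pdy u q) + 2 * pdx u q * (pdt u q) ^ 2
            - 3 * (pdy u q) ^ 2 * pdt u q + 4 * pdy u q * (pdt u q) ^ 3 - (pdt u q) ^ 5) p
        + pdt (fun q => -(2 * pdx u q * pdy u q * pdt u q) - (pdx u q) ^ 2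
            - 3 * (pdy u q) ^ 2 * (pdt u q) ^ 2 + pdy u q * (pdt u q) ^ 4
            + (pdy u q) ^ 3) p = 0) := by
  obtain ⟨hX, hY, hT⟩ := hu.differentiable_pd
  obtain ⟨hXY, hXT, hYT⟩ := hu.mixed_pd_comm
  generalize pdx u = X, pdy u = Y, pdt u = T at *
  simp (disch := fun_prop) only [pdx_eq_fderiv, pdy_eq_fderiv, pdt_eq_fderiv] at heq hXY hXT hYT ⊢
  simp (disch := fun_prop) only [div_eq_mul_inv, fderiv_fun_add, fderiv_fun_sub,
    fderiv_fun_neg, fderiv_fun_mul, fderiv_fun_pow, fderiv_fun_const, add_apply, neg_apply,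
    sub_apply, smul_apply, zero_apply, smul_eq_mul, nsmul_eq_mul, Pi.zero_apply, hXY, hXT, hYT]
    at heq ⊢
  refine ⟨fun p => ?_, fun p => ?_, fun p => ?_, fun p => ?_⟩
  · linear_combination heq p
  · linear_combination T p * heq p
  · linear_combination (2 * Y p - 3 * T p ^ 2) * heq p
  · linear_combination (-2 * X p - 6 * Y p * T p + 4 * T p ^ 3) * heq p
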